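/- Let 0 < μ ≤ L, let f ∈ S²_{μ,L}(ℝ^d) with unique minimizer x⋆, let 0 < s < 1/L, and let X : (0,∞) → ℝ^d be a twice differentiable solution of the gradient-correction high-resolution ODE. Then for all t ≥ 4/(μ√s), the continuous Lyapunov function satisfies (d/dt)E(t) ≤ −(μ√s/4)·E(t). -/

import Mathlib

/-!
The computation is the classical Lyapunov argument. Along the flow the vector
`w = tẊ + 2(X - x⋆) + t√s∇f(X)` satisfies `ẇ = -(t + √s/2)∇f(X)`, because the ODE
eliminates `Ẍ` and the Hessian term. Hence `Ė` is an explicit expression in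
`f(X) - f(x⋆)`, `‖Ẋ‖²`, `⟨∇f(X), X - x⋆⟩`, `‖∇f(X)‖²` and `⟨(d/dt)∇f(X), Ẋ⟩`, each of which
strong convexity bounds: the first-order inequality, the Polyak–Łojasiewicz inequality, and
`μ`-monotonicity of `∇f` (passed to the derivative along `X`). With `‖w‖² ≤ 3(…)`,
`μs ≤ 1` and `μ√s t ≥ 4` the bounds combine to `Ė ≤ -(μ√s/4)E`.
-/

open scoped RealInnerProductSpace

/-- The continuous Lyapunov function
`E(t) = 2t(t+√s)(F(X t) - F(x⋆)) + (t²/2)‖Ẋ(t)‖²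
        + (1/2)‖tẊ(t) + 2(X(t) - x⋆) + t√s∇F(X t)‖²`. -/
noncomputable def contLyap {d : ℕ} (s : ℝ) (F : EuclideanSpace ℝ (Fin d) → ℝ)
    (F' : EuclideanSpace ℝ (Fin d) → EuclideanSpace ℝ (Fin d))
    (X V : ℝ → EuclideanSpace ℝ (Fin d)) (xstar : EuclideanSpace ℝ (Fin d)) (t : ℝ) : ℝ :=
  2 * t * (t + Real.sqrt s) * (F (X t) - F xstar) + t ^ 2 / 2 * ‖V t‖ ^ 2
    + 1 / 2 * ‖t • V t + (2 : ℝ) • (X t - xstar) + (t * Real.sqrt s) • F' (X t)‖ ^ 2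

theorem norm_add₃_sq_le {E : Type*} [SeminormedAddCommGroup E] (x y z : E) :
    ‖x + y + z‖ ^ 2 ≤ 3 * (‖x‖ ^ 2 + ‖y‖ ^ 2 + ‖z‖ ^ 2) := by
  have := norm_add₃_le (a := x) (b := y) (c := z)
  nlinarith [norm_nonneg (x + y + z), sq_nonneg (‖x‖ - ‖y‖), sq_nonneg (‖y‖ - ‖z‖),
    sq_nonneg (‖x‖ - ‖z‖)]

theorem ConvexOn.add_fderiv_sub_le {E : Type*} [NormedAddCommGroup E] [NormedSpace ℝ E]
    {s : Set E} {g : E → ℝ} {g' : E →L[ℝ] ℝ} {z w : E} (hg : ConvexOn ℝ s g)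
    (hz : z ∈ s) (hw : w ∈ s) (hd : HasFDerivAt g g' z) :
    g z + g' (w - z) ≤ g w := by
  have hline : HasDerivAt (g ∘ AffineMap.lineMap (k := ℝ) z w) (g' (w - z)) 0 :=
    hd.comp_hasDerivAt_of_eq 0 AffineMap.hasDerivAt_lineMap (by simp)
  have hslope := (hg.comp_affineMap (AffineMap.lineMap (k := ℝ) z w)).le_slope_of_hasDerivAt
    (by simpa using hz) (by simpa using hw) zero_lt_one hline
  simp only [slope_def_field, Function.comp_apply, AffineMap.lineMap_apply_one,
    AffineMap.lineMap_apply_zero, sub_zero, div_one] at hslope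
  linarith

section StrongConvexity

variable {F : Type*} [NormedAddCommGroup F] [InnerProductSpace ℝ F] [CompleteSpace F]
  {s : Set F} {m : ℝ} {f : F → ℝ} {z w gz gw : F}

theorem StrongConvexOn.add_inner_add_le (hf : StrongConvexOn s m f) (hz : z ∈ s) (hw : w ∈ s)
    (hd : HasGradientAt f gz z) :
    f z + ⟪gz, w - z⟫ + m / 2 * ‖w - z‖ ^ 2 ≤ f w := by
  have hq := ((hasStrictFDerivAt_norm_sq z).hasFDerivAt.const_mul (m / 2))
  have := (strongConvexOn_iff_convex.mp hf).add_fderiv_sub_le hz hw (hd.hasFDerivAt.sub hq)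
  simp only [sub_apply, InnerProductSpace.toDual_apply_apply,
    smul_apply, innerSL_apply_apply, smul_eq_mul, nsmul_eq_mul,
    inner_sub_right, real_inner_self_eq_norm_sq, Nat.cast_ofNat] at this
  rw [norm_sub_sq_real, inner_sub_right, real_inner_comm z w]
  linarith

theorem StrongConvexOn.sub_add_le_inner (hf : StrongConvexOn s m f) (hz : z ∈ s) (hw : w ∈ s)
    (hd : HasGradientAt f gz z) :
    f z - f w + m / 2 * ‖z - w‖ ^ 2 ≤ ⟪gz, z - w⟫ := by
  have := hf.add_inner_add_le hz hw hd
  rw [← neg_sub z w, inner_neg_right, norm_neg] at this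
  linarith

theorem StrongConvexOn.two_mul_sub_le_norm_sq (hf : StrongConvexOn s m f) (hm : 0 ≤ m)
    (hz : z ∈ s) (hw : w ∈ s) (hd : HasGradientAt f gz z) :
    2 * m * (f z - f w) ≤ ‖gz‖ ^ 2 := by
  have hsc := hf.add_inner_add_le hz hw hd
  have hsq : 0 ≤ ‖gz + m • (w - z)‖ ^ 2 := sq_nonneg _
  rw [norm_add_sq_real, inner_smul_right, norm_smul, mul_pow, Real.norm_eq_abs, sq_abs] at hsq
  nlinarith

theorem StrongConvexOn.mul_norm_sq_le_inner_sub (hf : StrongConvexOn s m f) (hz : z ∈ s)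
    (hw : w ∈ s) (hdz : HasGradientAt f gz z) (hdw : HasGradientAt f gw w) :
    m * ‖z - w‖ ^ 2 ≤ ⟪gz - gw, z - w⟫ := by
  have h₁ := hf.sub_add_le_inner hz hw hdz
  have h₂ := hf.sub_add_le_inner hw hz hdw
  rw [← neg_sub z w, inner_neg_right, norm_neg] at h₂
  rw [inner_sub_left]
  linarith

end StrongConvexity

theorem mul_norm_sq_deriv_le_inner_deriv {F : Type*} [NormedAddCommGroup F]
    [InnerProductSpace ℝ F] {m : ℝ} {A : F → F} (hA : ∀ z w, m * ‖z - w‖ ^ 2 ≤ ⟪A z - A w, z - w⟫)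
    {X : ℝ → F} {V G : F} {t : ℝ} (hX : HasDerivAt X V t)
    (hAX : HasDerivAt (fun τ => A (X τ)) G t) :
    m * ‖V‖ ^ 2 ≤ ⟪G, V⟫ := by
  have hXs := hasDerivAt_iff_tendsto_slope.mp hX
  have hGs := hasDerivAt_iff_tendsto_slope.mp hAX
  refine le_of_tendsto_of_tendsto' ((hXs.norm.pow 2).const_mul m) (hGs.inner hXs) fun y => ?_
  simp only [slope_def_module, inner_smul_left, inner_smul_right, norm_smul, mul_pow,
    Real.norm_eq_abs, sq_abs, RCLike.conj_to_real]
  have := mul_le_mul_of_nonneg_left (hA (X y) (X t)) (sq_nonneg (y - t)⁻¹)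
  linarith

section GradientCorrectionODE

variable {F : Type*} [NormedAddCommGroup F] [InnerProductSpace ℝ F]
  {s t : ℝ} {f' : F → F} {xstar : F} {X X' X'' G' : ℝ → F}

theorem smul_accel_eq_of_ode (ht : t ≠ 0)
    (hode : X'' t + (3 / t) • X' t + Real.sqrt s • G' t
      + (1 + 3 * Real.sqrt s / (2 * t)) • f' (X t) = 0) :
    t • X'' t = -((3 : ℝ) • X' t + (t * Real.sqrt s) • G' t
      + (t + 3 * Real.sqrt s / 2) • f' (X t)) := by
  have h := congrArg (t • ·) hode
  simp only [smul_add, smul_smul, smul_zero] at h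
  rw [eq_neg_iff_add_eq_zero, ← h]
  match_scalars <;> field_simp

theorem hasDerivAt_momentum (ht : t ≠ 0) (hX : HasDerivAt X (X' t) t)
    (hX' : HasDerivAt X' (X'' t) t) (hG' : HasDerivAt (fun τ => f' (X τ)) (G' t) t)
    (hode : X'' t + (3 / t) • X' t + Real.sqrt s • G' t
      + (1 + 3 * Real.sqrt s / (2 * t)) • f' (X t) = 0) :
    HasDerivAt (fun τ => τ • X' τ + (2 : ℝ) • (X τ - xstar) + (τ * Real.sqrt s) • f' (X τ))
      (-(t + Real.sqrt s / 2) • f' (X t)) t := by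
  have h := (((hasDerivAt_id t).smul hX').add ((hX.sub_const xstar).const_smul (2 : ℝ))).add
    (((hasDerivAt_id t).mul_const (Real.sqrt s)).smul hG')
  refine h.congr_deriv ?_
  simp only [id, one_smul, one_mul, smul_accel_eq_of_ode ht hode]
  module

end GradientCorrectionODE

theorem hasDerivAt_contLyap {d : ℕ} {s t : ℝ} {f : EuclideanSpace ℝ (Fin d) → ℝ}
    {f' : EuclideanSpace ℝ (Fin d) → EuclideanSpace ℝ (Fin d)} {xstar : EuclideanSpace ℝ (Fin d)}
    {X X' X'' G' : ℝ → EuclideanSpace ℝ (Fin d)} (ht : t ≠ 0)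
    (hf : HasGradientAt f (f' (X t)) (X t)) (hX : HasDerivAt X (X' t) t)
    (hX' : HasDerivAt X' (X'' t) t) (hG' : HasDerivAt (fun τ => f' (X τ)) (G' t) t)
    (hode : X'' t + (3 / t) • X' t + Real.sqrt s • G' t
      + (1 + 3 * Real.sqrt s / (2 * t)) • f' (X t) = 0) :
    HasDerivAt (contLyap s f f' X X' xstar)
      ((4 * t + 2 * Real.sqrt s) * (f (X t) - f xstar) - 2 * t * ‖X' t‖ ^ 2
        - Real.sqrt s * t ^ 2 * ⟪G' t, X' t⟫
        - (2 * t + Real.sqrt s) * ⟪f' (X t), X t - xstar⟫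
        - Real.sqrt s * t * (t + Real.sqrt s / 2) * ‖f' (X t)‖ ^ 2) t := by
  have hfX : HasDerivAt (fun τ => f (X τ)) ⟪f' (X t), X' t⟫ t :=
    hf.hasFDerivAt.comp_hasDerivAt t hX
  have h := ((((hasDerivAt_id t).const_mul 2).mul ((hasDerivAt_id t).add_const (Real.sqrt s))).mul
    (hfX.sub_const (f xstar))).add (((hasDerivAt_pow 2 t).div_const 2).mul hX'.norm_sq) |>.add
    ((hasDerivAt_momentum (xstar := xstar) ht hX hX' hG' hode).norm_sq.const_mul (1 / 2))
  refine h.congr_deriv ?_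
  have haccel : t * ⟪X' t, X'' t⟫ = -3 * ‖X' t‖ ^ 2 - t * Real.sqrt s * ⟪G' t, X' t⟫
      - (t + 3 * Real.sqrt s / 2) * ⟪f' (X t), X' t⟫ := by
    rw [← inner_smul_right, smul_accel_eq_of_ode ht hode]
    simp only [inner_neg_right, inner_add_right, inner_smul_right, real_inner_self_eq_norm_sq,
      real_inner_comm (X' t)]
    ring
  have hmom : ⟪f' (X t), t • X' t + (2 : ℝ) • (X t - xstar) + (t * Real.sqrt s) • f' (X t)⟫
      = t * ⟪f' (X t), X' t⟫ + 2 * ⟪f' (X t), X t - xstar⟫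
        + t * Real.sqrt s * ‖f' (X t)‖ ^ 2 := by
    simp only [inner_add_right, real_inner_smul_right, real_inner_self_eq_norm_sq]
  simp only [Pi.mul_apply, id, real_inner_smul_right]
  rw [real_inner_comm (f' (X t)) (_ + _ + _), hmom]
  push_cast
  linear_combination t * haccel

/-- `a, b, c, g, q, r, W` stand for `f(X) - f(x⋆)`, `‖Ẋ‖²`, `‖X - x⋆‖²`, `‖∇f(X)‖²`,
`⟪∇f(X), X - x⋆⟫`, `⟪(d/dt)∇f(X), Ẋ⟫` and `‖tẊ + 2(X - x⋆) + t√s∇f(X)‖²`. -/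
theorem lyapunov_derivative_le_of_bounds {μ σ t a b c g q r W : ℝ} (hμ : 0 < μ) (hσ : 0 < σ)
    (hμσ : μ * σ ^ 2 ≤ 1) (ht : 4 ≤ μ * σ * t) (ha : 0 ≤ a) (hb : 0 ≤ b) (hc : 0 ≤ c)
    (hq : a + μ / 2 * c ≤ q) (hg : 2 * μ * a ≤ g) (hr : μ * b ≤ r)
    (hW : W ≤ 3 * (t ^ 2 * b + 4 * c + σ ^ 2 * t ^ 2 * g)) :
    (4 * t + 2 * σ) * a - 2 * t * b - σ * t ^ 2 * r - (2 * t + σ) * q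
        - σ * t * (t + σ / 2) * g
      ≤ -(μ * σ / 4) * (2 * t * (t + σ) * a + t ^ 2 / 2 * b + 1 / 2 * W) := by
  have ht0 : 0 < t := pos_of_mul_pos_right (by linarith) (mul_pos hμ hσ).le
  have hσt : σ ≤ t := by nlinarith
  have hg_coef : 0 ≤ σ * t * (t + σ / 2) - 3 * μ * σ ^ 3 * t ^ 2 / 8 := by
    nlinarith [mul_le_mul_of_nonneg_right hμσ (by positivity : (0 : ℝ) ≤ σ * t ^ 2)]
  have ha_coef : 2 * t + σ + μ * σ * t ^ 2 / 2 + μ * σ ^ 2 * t / 2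
      - 2 * μ * (σ * t * (t + σ / 2) - 3 * μ * σ ^ 3 * t ^ 2 / 8) ≤ 0 := by
    nlinarith [mul_le_mul_of_nonneg_right hμσ (by positivity : (0 : ℝ) ≤ μ * σ * t ^ 2),
      mul_le_mul_of_nonneg_right ht ht0.le]
  linarith [mul_le_mul_of_nonneg_left hr (by positivity : (0 : ℝ) ≤ σ * t ^ 2),
    mul_le_mul_of_nonneg_left hq (by positivity : (0 : ℝ) ≤ 2 * t + σ),
    mul_le_mul_of_nonneg_left hW (by positivity : (0 : ℝ) ≤ μ * σ / 8),
    mul_le_mul_of_nonneg_left hg hg_coef, mul_nonpos_of_nonpos_of_nonneg ha_coef ha,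
    mul_nonneg (by positivity : (0 : ℝ) ≤ 2 * t + μ * σ * t ^ 2 / 2) hb,
    mul_nonneg (mul_nonneg hμ.le (sub_nonneg.mpr hσt)) hc]

theorem gradient_correction_ode_lyapunov_derivative_general {d : ℕ} (μ L s : ℝ)
    (hμ : 0 < μ) (hμL : μ ≤ L) (hs : 0 < s) (hsL : s < 1 / L)
    (f : EuclideanSpace ℝ (Fin d) → ℝ)
    (f' : EuclideanSpace ℝ (Fin d) → EuclideanSpace ℝ (Fin d))
    (hdiff : ∀ z, HasGradientAt f (f' z) z)
    (hsc : ConvexOn ℝ Set.univ (fun z => f z - μ / 2 * ‖z‖ ^ 2))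
    (xstar : EuclideanSpace ℝ (Fin d)) (hmin : ∀ z, f xstar ≤ f z)
    (X X' X'' G' : ℝ → EuclideanSpace ℝ (Fin d))
    (hX : ∀ t : ℝ, 0 < t → HasDerivAt X (X' t) t)
    (hX' : ∀ t : ℝ, 0 < t → HasDerivAt X' (X'' t) t)
    (hG' : ∀ t : ℝ, 0 < t → HasDerivAt (fun τ => f' (X τ)) (G' t) t)
    (hode : ∀ t : ℝ, 0 < t →
      X'' t + (3 / t) • X' t + Real.sqrt s • G' t
        + (1 + 3 * Real.sqrt s / (2 * t)) • f' (X t) = 0)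
    :
    ∀ t : ℝ, 4 / (μ * Real.sqrt s) ≤ t →
      deriv (contLyap s f f' X X' xstar) t ≤
        -(μ * Real.sqrt s / 4) * contLyap s f f' X X' xstar t := by
  intro t ht
  have hσ : 0 < Real.sqrt s := Real.sqrt_pos.mpr hs
  have hμs : μ * Real.sqrt s ^ 2 ≤ 1 := by
    have hL : 0 < L := one_div_pos.mp (hs.trans hsL)
    rw [Real.sq_sqrt hs.le]
    nlinarith [(lt_div_iff₀ hL).mp hsL]
  have ht4 : 4 ≤ μ * Real.sqrt s * t := by
    rw [mul_comm]; exact (div_le_iff₀ (mul_pos hμ hσ)).mp ht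
  have ht0 : 0 < t := lt_of_lt_of_le (by positivity) ht
  have hf : StrongConvexOn Set.univ μ f := strongConvexOn_iff_convex.mpr hsc
  rw [(hasDerivAt_contLyap ht0.ne' (hdiff _) (hX t ht0) (hX' t ht0) (hG' t ht0)
    (hode t ht0)).deriv]
  refine lyapunov_derivative_le_of_bounds hμ hσ hμs ht4 (sub_nonneg.mpr (hmin _))
    (sq_nonneg _) (sq_nonneg ‖X t - xstar‖) (hf.sub_add_le_inner trivial trivial (hdiff _))
    (hf.two_mul_sub_le_norm_sq hμ.le trivial trivial (hdiff _))
    (mul_norm_sq_deriv_le_inner_deriv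
      (fun z w => hf.mul_norm_sq_le_inner_sub trivial trivial (hdiff z) (hdiff w))
      (hX t ht0) (hG' t ht0)) ((norm_add₃_sq_le _ _ _).trans_eq ?_)
  simp only [norm_smul, mul_pow, Real.norm_eq_abs, sq_abs]
  ring

theorem gradient_correction_ode_lyapunov_derivative {d : ℕ} (μ L s : ℝ)
    (hμ : 0 < μ) (hμL : μ ≤ L) (hs : 0 < s) (hsL : s < 1 / L)
    (f : EuclideanSpace ℝ (Fin d) → ℝ)
    (f' : EuclideanSpace ℝ (Fin d) → EuclideanSpace ℝ (Fin d))
    (hf2 : ContDiff ℝ 2 f)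
    (hdiff : ∀ z, HasGradientAt f (f' z) z)
    (hlip : ∀ z w, ‖f' z - f' w‖ ≤ L * ‖z - w‖)
    (hsc : ConvexOn ℝ Set.univ (fun z => f z - μ / 2 * ‖z‖ ^ 2))
    (xstar : EuclideanSpace ℝ (Fin d)) (hmin : ∀ z, f xstar ≤ f z)
    (huniq : ∀ z, (∀ w, f z ≤ f w) → z = xstar)
    (X X' X'' G' : ℝ → EuclideanSpace ℝ (Fin d))
    (hX : ∀ t : ℝ, 0 < t → HasDerivAt X (X' t) t)
    (hX' : ∀ t : ℝ, 0 < t → HasDerivAt X' (X'' t) t)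
    (hG' : ∀ t : ℝ, 0 < t → HasDerivAt (fun τ => f' (X τ)) (G' t) t)
    (hode : ∀ t : ℝ, 0 < t →
      X'' t + (3 / t) • X' t + Real.sqrt s • G' t
        + (1 + 3 * Real.sqrt s / (2 * t)) • f' (X t) = 0)
    :
    ∀ t : ℝ, 4 / (μ * Real.sqrt s) ≤ t →
      deriv (contLyap s f f' X X' xstar) t ≤
        -(μ * Real.sqrt s / 4) * contLyap s f f' X X' xstar t :=
  gradient_correction_ode_lyapunov_derivative_general μ L s hμ hμL hs hsL f f' hdiff hsc xstar hmin
    X X' X'' G' hX hX' hG' hode
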